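/- arXiv:2510.11263 — 3 statements merged into one kernel-verified Lean document; each statement's English description precedes it below -/
import Mathlib

section
/- The Thue–Morse-based coloring of ℤ is non-repetitive with 3 colors; consequently π(P) ≤ 3 for the infinite path P. -/
/-- A coloring `f` of the vertices of `G` is *non-repetitive* if no path
(walk with distinct vertices) has a color sequence of the form `w ++ w`
with `w` nonempty. -/
def NonRepetitive {V α : Type*} (G : SimpleGraph V) (f : V → α) : Prop :=
  ∀ ⦃u v : V⦄ (p : G.Walk u v), p.IsPath →
    ∀ w : List α, w ≠ [] → p.support.map f ≠ w ++ w

/-- The infinite path: the graph on `ℤ` with `i ~ j` iff `|i - j| = 1`. -/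
def infPath : SimpleGraph ℤ :=
  SimpleGraph.fromRel (fun i j => i - j = 1)

/-!
The coloring records the increments of a two-sided Thue–Morse word `T : ℤ → Bool`.

`T` is overlap-free, by induction on the period: an overlap of even period halves to an
overlap of `x ↦ T (2 * x)`, a word of the same kind, while an overlap of odd period forces
`x ↦ T (2 * x)` to take equal values at two adjacent positions, one of them even, which
such words never do. A square in the increment word makes `T x - T (x + k)` constant for
`x ∈ [n, n + k]`; as `T` is `0/1`-valued the constant is `0`, an overlap of `T`. Finally, a
path in the line `ℤ` runs monotonically through an interval, so a repetitive path coloring is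
a square of the increment word or of its mirror image.
-/

section Words

variable {α : Type*}

def IsOverlapFree (g : ℤ → α) : Prop :=
  ∀ (n : ℤ) (k : ℕ), 0 < k → ¬ ∀ j ≤ k, g (n + j) = g (n + j + k)

def IsSquareFree (g : ℤ → α) : Prop :=
  ∀ (n : ℤ) (k : ℕ), 0 < k → ¬ ∀ j < k, g (n + j) = g (n + j + k)

lemma forall_mem_Icc_add_iff {P : ℤ → Prop} {n : ℤ} {k : ℕ} :
    (∀ x ∈ Set.Icc n (n + k), P x) ↔ ∀ j ≤ k, P (n + j) := by
  refine ⟨fun h j hj => h _ ⟨by omega, by omega⟩, fun h x ⟨hx₁, hx₂⟩ => ?_⟩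
  lift x - n to ℕ using (by omega) with j hj
  have := h j (by omega)
  rwa [hj, add_sub_cancel] at this

lemma IsSquareFree.comp_neg {g : ℤ → α} (hg : IsSquareFree g) :
    IsSquareFree (fun x => g (-x)) := by
  intro n k hk hsq
  refine hg (-n - 2 * k + 1) k hk fun j hj => ?_
  have := hsq (k - 1 - j) (by omega)
  dsimp only at this
  rwa [show -(n + ((k - 1 - j : ℕ) : ℤ)) = -n - 2 * k + 1 + j + k by omega,
    show -(n + ((k - 1 - j : ℕ) : ℤ) + k) = -n - 2 * k + 1 + j by omega, eq_comm] at this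

end Words

def thueMorse (n : ℕ) : Bool := decide (Odd (Nat.digits 2 n).sum)

lemma thueMorse_two_mul_add_one (n : ℕ) : thueMorse (2 * n + 1) = !thueMorse n := by
  rw [thueMorse, thueMorse, add_comm, Nat.digits_add 2 (by norm_num) 1 n (by norm_num) (by simp)]
  simp only [List.sum_cons, add_comm 1, Nat.odd_add_one, decide_not]

lemma thueMorse_two_mul (n : ℕ) : thueMorse (2 * n) = thueMorse n := by
  rcases Nat.eq_zero_or_pos n with rfl | hn
  · rfl
  · simp [thueMorse, Nat.digits_base_mul (le_refl 2) hn]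

lemma thueMorse_two_mul_add_mod_two (n m : ℕ) :
    thueMorse (2 * n + m % 2) = (thueMorse n ^^ decide (m % 2 = 1)) := by
  rcases Nat.mod_two_eq_zero_or_one m with h | h <;>
    simp [h, thueMorse_two_mul, thueMorse_two_mul_add_one]

lemma thueMorse_add_two_pow {e r : ℕ} (c : ℕ) (hr : r < 2 ^ e) :
    thueMorse (2 ^ (e + 1) * c + r + 2 ^ e) = !thueMorse (2 ^ (e + 1) * c + r) := by
  induction e generalizing r with
  | zero =>
    obtain rfl : r = 0 := by omega
    simp [thueMorse_two_mul, thueMorse_two_mul_add_one]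
  | succ e ih =>
    have hr2 : r / 2 < 2 ^ e := by rw [pow_succ] at hr; omega
    have h₁ : 2 ^ (e + 1 + 1) * c + r + 2 ^ (e + 1) =
        2 * (2 ^ (e + 1) * c + r / 2 + 2 ^ e) + r % 2 := by
      conv_lhs => rw [← Nat.div_add_mod r 2]
      ring
    have h₀ : 2 ^ (e + 1 + 1) * c + r = 2 * (2 ^ (e + 1) * c + r / 2) + r % 2 := by
      conv_lhs => rw [← Nat.div_add_mod r 2]
      ring
    rw [h₁, h₀, thueMorse_two_mul_add_mod_two, thueMorse_two_mul_add_mod_two, ih hr2,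
      Bool.not_xor]

/-- Clearing the lowest set bit of a nonzero integer changes the value. -/
def IsThueMorseLike (T : ℤ → Bool) : Prop :=
  ∀ (e : ℕ) (n : ℤ), T (2 ^ e * (2 * n + 1)) ≠ T (2 ^ e * (2 * n))

/-- On negative integers this is the parity of the number of zero bits in two's complement. -/
def thueMorseInt : ℤ → Bool
  | (m : ℕ) => thueMorse m
  | .negSucc m => thueMorse m

lemma isThueMorseLike_thueMorseInt : IsThueMorseLike thueMorseInt := by
  intro e n
  rcases n with m | m
  · have h₁ : (2 : ℤ) ^ e * (2 * m + 1) = ((2 ^ (e + 1) * m + 0 + 2 ^ e : ℕ) : ℤ) := by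
      push_cast; ring
    have h₀ : (2 : ℤ) ^ e * (2 * m) = ((2 ^ (e + 1) * m + 0 : ℕ) : ℤ) := by
      push_cast; ring
    rw [Int.ofNat_eq_natCast, h₁, h₀]
    exact Bool.eq_not.mp (thueMorse_add_two_pow m (Nat.two_pow_pos e))
  · have h₁ : (2 : ℤ) ^ e * (2 * Int.negSucc m + 1) =
        Int.negSucc (2 ^ (e + 1) * m + (2 ^ e - 1)) := by
      rw [Int.negSucc_eq, Int.negSucc_eq]; push_cast [Nat.one_le_two_pow]; ring
    have h₀ : (2 : ℤ) ^ e * (2 * Int.negSucc m) =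
        Int.negSucc (2 ^ (e + 1) * m + (2 ^ e - 1) + 2 ^ e) := by
      rw [Int.negSucc_eq, Int.negSucc_eq]; push_cast [Nat.one_le_two_pow]; ring
    rw [h₁, h₀]
    exact (Bool.eq_not.mp
      (thueMorse_add_two_pow m (Nat.sub_lt (Nat.two_pow_pos e) one_pos))).symm

namespace IsThueMorseLike

variable {T : ℤ → Bool}

lemma comp_two_mul (hT : IsThueMorseLike T) : IsThueMorseLike (fun x => T (2 * x)) :=
  fun e n => by simpa only [← mul_assoc, ← pow_succ'] using hT (e + 1) n

lemma apply_two_mul_add_one (hT : IsThueMorseLike T) (y : ℤ) : T (2 * y + 1) = !T (2 * y) :=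
  Bool.eq_not.mpr (by simpa using hT 0 y)

lemma odd_of_apply_eq_apply_add_one (hT : IsThueMorseLike T) {x : ℤ} (h : T x = T (x + 1)) :
    Odd x := by
  obtain ⟨y, rfl | rfl⟩ := Int.even_or_odd' x
  · exact absurd h.symm (by simpa using hT 0 y)
  · exact odd_two_mul_add_one y

lemma exists_overlap_comp_two_mul (hT : IsThueMorseLike T) {n : ℤ} {m : ℕ}
    (h : ∀ x ∈ Set.Icc n (n + 2 * m), T x = T (x + 2 * m)) :
    ∃ c : ℤ, ∀ y ∈ Set.Icc c (c + m), T (2 * y) = T (2 * (y + m)) := by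
  obtain ⟨c, rfl | rfl⟩ := Int.even_or_odd' n
  · refine ⟨c, fun y ⟨hy₁, hy₂⟩ => ?_⟩
    rw [mul_add]
    exact h (2 * y) ⟨by omega, by omega⟩
  · refine ⟨c, fun y ⟨hy₁, hy₂⟩ => ?_⟩
    have := h (2 * y + 1) ⟨by omega, by omega⟩
    rwa [show 2 * y + 1 + 2 * m = 2 * (y + m) + 1 by ring, hT.apply_two_mul_add_one,
      hT.apply_two_mul_add_one, Bool.not_inj_iff] at this

lemma not_overlap_of_odd (hT : IsThueMorseLike T) {n : ℤ} {l : ℕ} :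
    ¬ ∀ x ∈ Set.Icc n (n + (2 * l + 1)), T x = T (x + (2 * l + 1)) := by
  intro h
  obtain ⟨a, ha₁, ha₂⟩ : ∃ a, n ≤ 2 * a ∧ 2 * a ≤ n + 1 := ⟨(n + 1) / 2, by omega, by omega⟩
  rcases Nat.eq_zero_or_pos l with rfl | hl
  · have := h (2 * a) ⟨ha₁, by omega⟩
    rw [Nat.cast_zero, mul_zero, zero_add, hT.apply_two_mul_add_one] at this
    exact Bool.not_eq_not.mpr rfl this
  have key : ∀ b, n ≤ 2 * b → 2 * b + 2 ≤ n + (2 * l + 1) →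
      T (2 * b) = T (2 * (b + 1)) ∧ T (2 * (b + l)) = T (2 * (b + l + 1)) := by
    intro b hb₁ hb₂
    have e₀ := h (2 * b) ⟨hb₁, by omega⟩
    have e₁ := h (2 * b + 1) ⟨by omega, by omega⟩
    have e₂ := h (2 * (b + 1)) ⟨by omega, by omega⟩
    rw [show 2 * b + (2 * l + 1) = 2 * (b + l) + 1 by ring, hT.apply_two_mul_add_one] at e₀
    rw [show 2 * b + 1 + (2 * l + 1) = 2 * (b + l + 1) by ring, hT.apply_two_mul_add_one] at e₁
    rw [show 2 * (b + 1) + (2 * l + 1) = 2 * (b + l + 1) + 1 by ring,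
      hT.apply_two_mul_add_one] at e₂
    exact ⟨by rw [e₂, ← e₁, Bool.not_not], by rw [← e₁, e₀, Bool.not_not]⟩
  have hS := hT.comp_two_mul
  obtain ⟨h₀, hₗ⟩ := key a ha₁ (by omega)
  have ha := Int.odd_iff.mp (hS.odd_of_apply_eq_apply_add_one h₀)
  rcases Nat.lt_or_ge l 2 with hl₂ | hl₂
  · have hal := Int.odd_iff.mp (hS.odd_of_apply_eq_apply_add_one hₗ)
    omega
  · have ha' := Int.odd_iff.mp
      (hS.odd_of_apply_eq_apply_add_one (key (a + 1) (by omega) (by omega)).1)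
    omega

end IsThueMorseLike

theorem IsThueMorseLike.isOverlapFree {T : ℤ → Bool} (hT : IsThueMorseLike T) :
    IsOverlapFree T := by
  suffices ∀ (k : ℕ) (T : ℤ → Bool), IsThueMorseLike T → 0 < k → ∀ n : ℤ,
      ¬ ∀ x ∈ Set.Icc n (n + k), T x = T (x + k) by
    intro n k hk hsq
    exact this k T hT hk n (forall_mem_Icc_add_iff.mpr hsq)
  intro k
  induction k using Nat.strong_induction_on with
  | _ k ih =>
  intro T hT hk n hsq
  obtain ⟨m, rfl | rfl⟩ := Nat.even_or_odd' k
  · push_cast at hsq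
    obtain ⟨c, hc⟩ := hT.exists_overlap_comp_two_mul hsq
    exact ih m (by omega) _ hT.comp_two_mul (by omega) c hc
  · push_cast at hsq
    exact hT.not_overlap_of_odd hsq

/-- Encodes the increment `g (n + 1) - g n ∈ {0, -1, 1}`. -/
def diffColor (g : ℤ → Bool) (n : ℤ) : Fin 3 :=
  if g n = g (n + 1) then 0 else if g n then 1 else 2

lemma increment_eq_of_diffColor_eq {g : ℤ → Bool} {a b : ℤ}
    (h : diffColor g a = diffColor g b) :
    ((g (a + 1)).toNat : ℤ) - (g a).toNat = (g (b + 1)).toNat - (g b).toNat := by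
  revert h
  unfold diffColor
  cases g a <;> cases g (a + 1) <;> cases g b <;> cases g (b + 1) <;> decide

theorem IsOverlapFree.isSquareFree_diffColor {g : ℤ → Bool} (hg : IsOverlapFree g) :
    IsSquareFree (diffColor g) := by
  intro n k hk hsq
  set B : ℤ → ℤ := fun x => (g x).toNat
  have hB01 (x : ℤ) : 0 ≤ B x ∧ B x ≤ 1 :=
    ⟨by positivity, by simp only [B]; exact_mod_cast Bool.toNat_le (g x)⟩
  have hconst : ∀ j ≤ k, B (n + j) - B (n + j + k) = B n - B (n + k) := by
    intro j hj
    induction j with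
    | zero => simp
    | succ j ih =>
      have := increment_eq_of_diffColor_eq (hsq j (by omega))
      rw [show n + j + k + 1 = n + j + 1 + k by ring] at this
      push_cast
      rw [← add_assoc]
      linarith [ih (by omega)]
  have hzero : B n = B (n + k) := by
    have := hconst k le_rfl
    have := hB01 n; have := hB01 (n + k); have := hB01 (n + k + k)
    omega
  refine hg n k hk fun j hj => ?_
  have h := hconst j hj
  have hBeq : B (n + j) = B (n + j + k) := by omega
  simp only [B, Nat.cast_inj] at hBeq
  cases hx : g (n + j) <;> cases hy : g (n + j + k) <;> simp_all

lemma infPath_adj {a b : ℤ} : infPath.Adj a b ↔ b = a + 1 ∨ b = a - 1 := by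
  simp only [infPath, SimpleGraph.fromRel_adj]
  omega

lemma exists_getVert_eq_of_isPath_infPath {u v : ℤ} {p : infPath.Walk u v} (hp : p.IsPath) :
    ∃ s : ℤ, (s = 1 ∨ s = -1) ∧ ∀ i ≤ p.length, p.getVert i = u + s * i := by
  rcases Nat.eq_zero_or_pos p.length with h₀ | hpos
  · exact ⟨1, Or.inl rfl, fun i hi => by obtain rfl : i = 0 := (by omega); simp⟩
  obtain ⟨s, hs, h₁⟩ : ∃ s : ℤ, (s = 1 ∨ s = -1) ∧ p.getVert 1 = u + s := by
    have := infPath_adj.mp (p.adj_getVert_succ hpos)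
    rw [SimpleGraph.Walk.getVert_zero, zero_add] at this
    exact ⟨p.getVert 1 - u, by omega, by ring⟩
  -- a path never steps back onto the previous vertex, so every step repeats the first one
  have step : ∀ i, i + 1 ≤ p.length →
      p.getVert i = u + s * i ∧ p.getVert (i + 1) = u + s * ((i + 1 : ℕ) : ℤ) := by
    intro i
    induction i with
    | zero => intro _; simp [h₁]
    | succ i ih =>
      intro hi
      obtain ⟨-, hi₁⟩ := ih (by omega)
      refine ⟨hi₁, ?_⟩
      have hadj := infPath_adj.mp (p.adj_getVert_succ (i := i + 1) (by omega))
      have hne : p.getVert (i + 1 + 1) ≠ p.getVert i := fun h => by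
        have := hp.getVert_injOn (by simp; omega) (by simp; omega) h
        omega
      have hi₀ := (ih (by omega)).1
      push_cast at *
      rcases hs with rfl | rfl <;> omega
  refine ⟨s, hs, fun i hi => ?_⟩
  rcases Nat.lt_or_ge i p.length with h | h
  · exact (step i (by omega)).1
  · obtain ⟨j, rfl⟩ := Nat.exists_eq_add_one_of_ne_zero (by omega : i ≠ 0)
    exact (step j (by omega)).2

lemma SimpleGraph.Walk.getVert_eq_of_support_map_eq_append_self {V α : Type*}
    {G : SimpleGraph V} {u v : V} {p : G.Walk u v} {f : V → α} {w : List α}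
    (h : p.support.map f = w ++ w) :
    p.length + 1 = 2 * w.length ∧
      ∀ i < w.length, f (p.getVert i) = f (p.getVert (i + w.length)) := by
  have hlen : p.length + 1 = 2 * w.length := by
    simpa [two_mul] using congrArg List.length h
  refine ⟨hlen, fun i hi => Option.some.inj ?_⟩
  calc some (f (p.getVert i)) = (p.support.map f)[i]? := by
        rw [List.getElem?_map, ← p.getVert_eq_support_getElem? (by omega)]; rfl
    _ = w[i]? := by rw [h, List.getElem?_append_left hi]
    _ = (p.support.map f)[i + w.length]? := by
        rw [h, List.getElem?_append_right (by omega), Nat.add_sub_cancel]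
    _ = some (f (p.getVert (i + w.length))) := by
        rw [List.getElem?_map, ← p.getVert_eq_support_getElem? (by omega)]; rfl

theorem IsSquareFree.nonRepetitive_infPath {α : Type*} {f : ℤ → α} (hf : IsSquareFree f) :
    NonRepetitive infPath f := by
  intro u v p hp w hw hsq
  obtain ⟨hlen, hrep⟩ := p.getVert_eq_of_support_map_eq_append_self hsq
  have hk : 0 < w.length := List.length_pos_iff.mpr hw
  obtain ⟨s, hs | hs, hvert⟩ := exists_getVert_eq_of_isPath_infPath hp
  · refine hf u w.length hk fun j hj => ?_
    have := hrep j hj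
    rwa [hvert j (by omega), hvert _ (by omega), hs, Nat.cast_add, one_mul, one_mul,
      ← add_assoc] at this
  · refine hf.comp_neg (-u) w.length hk fun j hj => ?_
    have := hrep j hj
    rw [hvert j (by omega), hvert _ (by omega), hs] at this
    convert this using 2 <;> push_cast <;> ring

/-- There is a non-repetitive `3`-coloring of the infinite path (e.g. the
square-free ternary sequence derived from the Thue–Morse sequence);
consequently `π(P) ≤ 3`. -/
theorem pi_infPath_le_three :
    ∃ f : ℤ → Fin 3, NonRepetitive infPath f :=
  ⟨diffColor thueMorseInt,
    isThueMorseLike_thueMorseInt.isOverlapFree.isSquareFree_diffColor.nonRepetitive_infPath⟩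
end

section
/- Every 3-coloring of the 5-cycle C_5 contains a repetitively colored path; hence π(C_5) ≥ 4. -/
/-- The cycle on `ZMod n`: `i` is adjacent to `i + 1`. -/
def cycle (n : ℕ) : SimpleGraph (ZMod n) :=
  SimpleGraph.fromRel (fun i j => i - j = 1)

lemma cycle5_adj_succ (i : ZMod 5) : (cycle 5).Adj i (i + 1) := by
  refine ⟨?_, Or.inr (by ring)⟩
  intro he
  exact absurd (left_eq_add.mp he) (by decide)

set_option maxRecDepth 4000 in
lemma key5 : ∀ f : ZMod 5 → Fin 3, (∀ i, f i ≠ f (i + 1)) →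
    ∃ i : ZMod 5, f (i + 1 + 1) = f i ∧ f (i + 1 + 1 + 1) = f (i + 1) := by decide

lemma nodup4 : ∀ i : ZMod 5, List.Nodup [i, i + 1, i + 1 + 1, i + 1 + 1 + 1] := by decide

/-- Every `3`-coloring of the `5`-cycle contains a repetitively colored path;
hence `π(C₅) ≥ 4`. -/
theorem pi_C5_ge_four :
    ∀ f : ZMod 5 → Fin 3, ¬ NonRepetitive (cycle 5) f := by
  intro f h
  have hne : ∀ i : ZMod 5, f i ≠ f (i + 1) := by
    intro i he
    have hp : (SimpleGraph.Walk.cons (cycle5_adj_succ i) SimpleGraph.Walk.nil).IsPath := by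
      simp only [SimpleGraph.Walk.isPath_def, SimpleGraph.Walk.support_cons,
        SimpleGraph.Walk.support_nil, List.nodup_cons, List.mem_singleton, List.nodup_nil,
        and_true, List.not_mem_nil, not_false_eq_true]
      exact (cycle5_adj_succ i).ne
    exact h _ hp [f i] (by simp) (by simp [he])
  obtain ⟨i, h1, h2⟩ := key5 f hne
  have hp : (SimpleGraph.Walk.cons (cycle5_adj_succ i)
      (SimpleGraph.Walk.cons (cycle5_adj_succ (i + 1))
        (SimpleGraph.Walk.cons (cycle5_adj_succ (i + 1 + 1)) SimpleGraph.Walk.nil))).IsPath := by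
    rw [SimpleGraph.Walk.isPath_def]
    simpa using nodup4 i
  exact h _ hp [f i, f (i + 1)] (by simp) (by simp [h1, h2])
end

section
/- π(P □ P) ≥ 4, where P □ P is the infinite grid ℤ² with (a,b) ~ (c,d) iff |a−c| + |b−d| = 1. -/
/-- The infinite grid `P □ P`: the graph on `ℤ × ℤ` where
`(a, b) ~ (c, d)` iff `|a - c| + |b - d| = 1`. -/
def grid : SimpleGraph (ℤ × ℤ) :=
  SimpleGraph.fromRel (fun p q => |p.1 - q.1| + |p.2 - q.2| = 1)

/-!
The colors along a 10-cycle form a cyclic ternary word of length 10, and every such word contains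
a square `u u` with `u` nonempty and `2 |u| ≤ 10` (Currie); this is verified by a search over
square-free words, of which there are few. Such a square is the color sequence of an arc of the
cycle, and an arc with at most as many vertices as the cycle is a path. The boundary of a `2 × 5`
rectangle is a 10-cycle in the grid, and non-repetitiveness passes to subgraphs.
-/

open SimpleGraph

variable {α : Type*}

section Words

def HasSquarePrefix (w : List α) : Prop :=
  ∃ k ≤ w.length / 2, 0 < k ∧ ∀ i < k, w[i]? = w[k + i]?

def HasCyclicSquare (w : List α) : Prop :=
  ∃ s < w.length, ∃ k ≤ w.length / 2, 0 < k ∧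
    ∀ i < k, w[(s + i) % w.length]? = w[(s + k + i) % w.length]?

instance [DecidableEq α] (w : List α) : Decidable (HasSquarePrefix w) := by
  unfold HasSquarePrefix; infer_instance

instance [DecidableEq α] (w : List α) : Decidable (HasCyclicSquare w) := by
  unfold HasCyclicSquare; infer_instance

theorem HasSquarePrefix.hasCyclicSquare_append {w : List α} (h : HasSquarePrefix w)
    (t : List α) : HasCyclicSquare (t ++ w) := by
  obtain ⟨k, hk, hk0, hsq⟩ := h
  have hlen : (t ++ w).length = t.length + w.length := List.length_append
  refine ⟨t.length, by omega, k, by omega, hk0, fun i hi => ?_⟩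
  rw [Nat.mod_eq_of_lt (by omega), Nat.mod_eq_of_lt (by omega),
    List.getElem?_append_right (by omega), List.getElem?_append_right (by omega)]
  simpa [Nat.add_sub_cancel_left, Nat.add_assoc] using hsq i hi

def cyclicSquareSearch [DecidableEq α] (A : List α) : ℕ → List α → Bool
  | 0, w => decide (HasCyclicSquare w)
  | m + 1, w => decide (HasSquarePrefix w) || A.all fun a => cyclicSquareSearch A m (a :: w)

theorem hasCyclicSquare_of_cyclicSquareSearch [DecidableEq α] {A : List α} {m : ℕ}
    {w : List α} (h : cyclicSquareSearch A m w = true) {t : List α} (ht : t.length = m)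
    (htA : ∀ a ∈ t, a ∈ A) : HasCyclicSquare (t ++ w) := by
  induction m generalizing w t with
  | zero =>
    rw [List.length_eq_zero_iff.mp ht]
    simpa [cyclicSquareSearch] using h
  | succ m ih =>
    simp only [cyclicSquareSearch, Bool.or_eq_true, decide_eq_true_eq, List.all_eq_true] at h
    rcases h with hw | hA
    · exact hw.hasCyclicSquare_append t
    · obtain ⟨t, a, rfl⟩ := (List.eq_nil_or_concat' t).resolve_left (by rintro rfl; simp at ht)
      simp only [List.length_append, List.length_singleton, Nat.add_right_cancel_iff,
        List.mem_append, List.mem_singleton] at ht htA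
      rw [List.append_assoc, List.singleton_append]
      exact ih (hA a (htA a (.inr rfl))) ht fun b hb => htA b (.inl hb)

theorem hasCyclicSquare_of_length_eq_ten (w : List (Fin 3)) (hw : w.length = 10) :
    HasCyclicSquare w := by
  have hsearch : cyclicSquareSearch (List.finRange 3) 10 [] = true := by decide +kernel
  simpa using hasCyclicSquare_of_cyclicSquareSearch hsearch hw (by simp)

end Words

theorem NonRepetitive.comp_copy {V W : Type*} {G : SimpleGraph V} {H : SimpleGraph W}
    {f : W → α} (hf : NonRepetitive H f) (φ : G.Copy H) : NonRepetitive G (f ∘ φ) := by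
  intro u v p hp w hw hpw
  refine hf (p.map φ.toHom) (hp.map φ.injective) w hw ?_
  rwa [Walk.support_map, List.map_map]

section CycleGraph

open Fin.NatCast

variable {n : ℕ}

theorem cycleGraph_adj_add_one (i : Fin (n + 2)) : (cycleGraph (n + 2)).Adj i (i + 1) :=
  cycleGraph_adj.mpr (.inr (add_sub_cancel_left i 1))

def cycleGraphHomOfAdj {V : Type*} {G : SimpleGraph V} (v : Fin (n + 2) → V)
    (hv : ∀ i, G.Adj (v i) (v (i + 1))) : cycleGraph (n + 2) →g G where
  toFun := v
  map_rel' {i j} h := by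
    rcases cycleGraph_adj.mp h with h | h
    · rw [eq_add_of_sub_eq' h]
      exact (hv j).symm
    · rw [eq_add_of_sub_eq' h]
      exact hv i

def cycleGraphArc (s : Fin (n + 2)) :
    (m : ℕ) → (cycleGraph (n + 2)).Walk s (s + (m : Fin (n + 2)))
  | 0 => Walk.nil.copy rfl (by simp)
  | m + 1 => ((cycleGraphArc s m).concat (cycleGraph_adj_add_one _)).copy rfl
      (by rw [Nat.cast_succ, add_assoc])

theorem support_cycleGraphArc (s : Fin (n + 2)) (m : ℕ) :
    (cycleGraphArc s m).support =
      (List.range (m + 1)).map fun i : ℕ => s + (i : Fin (n + 2)) := by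
  induction m with
  | zero => simp [cycleGraphArc]
  | succ m ih =>
    rw [cycleGraphArc, Walk.support_copy, Walk.support_concat, ih, List.range_succ (n := m + 1),
      List.map_append, List.map_singleton, Nat.cast_succ, add_assoc]

theorem isPath_cycleGraphArc (s : Fin (n + 2)) {m : ℕ} (hm : m < n + 2) :
    (cycleGraphArc s m).IsPath := by
  rw [Walk.isPath_def, support_cycleGraphArc]
  refine List.nodup_range.map_on fun x hx y hy hxy => ?_
  have := congrArg Fin.val (add_left_cancel hxy)
  simp only [List.mem_range] at hx hy
  rwa [Fin.val_natCast, Fin.val_natCast, Nat.mod_eq_of_lt (by omega),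
    Nat.mod_eq_of_lt (by omega)] at this

theorem getElem?_ofFn_mod (c : Fin (n + 2) → α) (j : ℕ) :
    (List.ofFn c)[j % (n + 2)]? = some (c j) := by
  rw [List.getElem?_ofFn, dif_pos (Nat.mod_lt _ (by omega))]
  congr

theorem not_nonRepetitive_cycleGraph_of_hasCyclicSquare {c : Fin (n + 2) → α}
    (h : HasCyclicSquare (List.ofFn c)) : ¬ NonRepetitive (cycleGraph (n + 2)) c := by
  obtain ⟨s, -, k, hk, hk0, hsq⟩ := h
  simp only [List.length_ofFn, getElem?_ofFn_mod, Option.some_inj] at hk hsq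
  intro hc
  refine hc (cycleGraphArc s (2 * k - 1)) (isPath_cycleGraphArc s (by omega))
    ((List.range k).map fun i : ℕ => c ↑(s + i)) (by simpa using hk0.ne') ?_
  rw [support_cycleGraphArc, List.map_map, show 2 * k - 1 + 1 = k + k by omega, List.range_add,
    List.map_append, List.map_map]
  congr 1
  · exact List.map_congr_left fun i _ => by simp
  · refine List.map_congr_left fun i hi => ?_
    rw [Function.comp_apply, hsq i (List.mem_range.mp hi)]
    simp only [Function.comp_apply, Nat.cast_add, add_assoc]

end CycleGraph

def gridCycle : Fin 10 → ℤ × ℤ :=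
  ![(0, 0), (1, 0), (2, 0), (3, 0), (4, 0), (4, 1), (3, 1), (2, 1), (1, 1), (0, 1)]

def cycleGraphCopyGrid : (cycleGraph 10).Copy grid :=
  Hom.toCopy (cycleGraphHomOfAdj (n := 8) gridCycle (by simp only [grid, fromRel_adj]; decide))
    (by decide)

theorem not_nonRepetitive_cycleGraph_ten (c : Fin 10 → Fin 3) :
    ¬ NonRepetitive (cycleGraph 10) c :=
  not_nonRepetitive_cycleGraph_of_hasCyclicSquare
    (hasCyclicSquare_of_length_eq_ten _ List.length_ofFn)

/-- Every `3`-coloring of the infinite grid `P □ P` admits a repetitively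
colored path; hence `π(P □ P) ≥ 4`. -/
theorem pi_grid_ge_four :
    ∀ f : ℤ × ℤ → Fin 3, ¬ NonRepetitive grid f :=
  fun f hf => not_nonRepetitive_cycleGraph_ten (f ∘ cycleGraphCopyGrid) (hf.comp_copy _)
end
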